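/- Let (X,d) be a compact metric space and (f_n) a sequence of continuous self-maps converging uniformly to a map f. Then for every N ∈ ℕ, the system (X, f_{1,∞}) is DC2' chaotic if and only if its N-th iterate system (X, f_{1,∞}^{[N]}) is DC2' chaotic. -/

import Mathlib

/-!
Uniform convergence of continuous maps on a compact space makes `(f n)` uniformly
equicontinuous, so two orbits that are `δ`-close at time `j` stay `t`-close during the next `N`
steps, in particular at the next multiple of `N`. Hence every block of `N` consecutive
`δ`-proximity times of the full orbit produces a `t`-proximity time of the `N`-th iterate, while
the proximity times of the `N`-th iterate are among those of the full orbit. Since counting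
functions grow by at most one per step, densities computed along the multiples of `N` agree
with the densities themselves, and the two comparisons transfer "lower density zero" and
"upper density positive" in both directions.
-/

open Filter
open scoped Classical

variable {X : Type*}

/-- `orb f n = f_n ∘ ⋯ ∘ f_1` (0-based: `f k` is the `(k+1)`-st map). -/
def orb (f : ℕ → X → X) : ℕ → X → X
  | 0 => id
  | n + 1 => f n ∘ orb f n

/-- Lower distributional density along the time sequence `τ`. -/
noncomputable def phiLow [MetricSpace X] (f : ℕ → X → X) (τ : ℕ → ℕ) (x y : X) (t : ℝ) : ℝ :=
  liminf (fun n =>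
    (((Finset.range n).filter
      (fun i => dist (orb f (τ i) x) (orb f (τ i) y) < t)).card : ℝ) / n) atTop

/-- Upper distributional density along the time sequence `τ`. -/
noncomputable def phiUpp [MetricSpace X] (f : ℕ → X → X) (τ : ℕ → ℕ) (x y : X) (t : ℝ) : ℝ :=
  limsup (fun n =>
    (((Finset.range n).filter
      (fun i => dist (orb f (τ i) x) (orb f (τ i) y) < t)).card : ℝ) / n) atTop

/-- Distributional chaos of type 2' along the time sequence `τ`. -/
def DC2' [MetricSpace X] (f : ℕ → X → X) (τ : ℕ → ℕ) : Prop :=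
  ∃ S : Set X, ¬S.Countable ∧ ∀ x ∈ S, ∀ y ∈ S, x ≠ y →
    (∃ ε > 0, phiLow f τ x y ε = 0) ∧ ∀ t : ℝ, 0 < t → 0 < phiUpp f τ x y t

open Topology Uniformity

section LiminfLimsup

variable {ι : Type*} {l : Filter ι} [l.NeBot] {u v w : ι → ℝ}

theorem liminf_le_liminf_of_le_add_of_tendsto_zero (h : ∀ᶠ i in l, u i ≤ v i + w i)
    (hw : Tendsto w l (𝓝 0)) (hu : IsBoundedUnder (· ≥ ·) l u)
    (hv_le : IsBoundedUnder (· ≤ ·) l v) (hv_ge : IsBoundedUnder (· ≥ ·) l v) :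
    liminf u l ≤ liminf v l :=
  calc liminf u l ≤ liminf (w + v) l :=
        liminf_le_liminf (h.mono fun i hi => by simpa [add_comm] using hi) hu
          (isBoundedUnder_le_add hw.isBoundedUnder_le hv_le).isCoboundedUnder_ge
    _ ≤ limsup w l + liminf v l :=
        liminf_add_le hw.isBoundedUnder_ge hw.isBoundedUnder_le hv_ge hv_le.isCoboundedUnder_ge
    _ = liminf v l := by rw [hw.limsup_eq, zero_add]

theorem limsup_le_limsup_of_le_add_of_tendsto_zero (h : ∀ᶠ i in l, u i ≤ v i + w i)
    (hw : Tendsto w l (𝓝 0)) (hu : IsBoundedUnder (· ≥ ·) l u)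
    (hv_le : IsBoundedUnder (· ≤ ·) l v) (hv_ge : IsBoundedUnder (· ≥ ·) l v) :
    limsup u l ≤ limsup v l :=
  calc limsup u l ≤ limsup (v + w) l :=
        limsup_le_limsup h hu.isCoboundedUnder_le (isBoundedUnder_le_add hv_le hw.isBoundedUnder_le)
    _ ≤ limsup v l + limsup w l :=
        limsup_add_le hv_ge hv_le hw.isBoundedUnder_ge.isCoboundedUnder_le hw.isBoundedUnder_le
    _ = limsup v l := by rw [hw.limsup_eq, add_zero]

end LiminfLimsup

section Density

open Nat

variable (p : ℕ → Prop) [DecidablePred p]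

noncomputable def countRatio (n : ℕ) : ℝ := count p n / n

noncomputable def lowerDensity : ℝ := liminf (countRatio p) atTop

noncomputable def upperDensity : ℝ := limsup (countRatio p) atTop

variable {p}

theorem countRatio_nonneg (n : ℕ) : 0 ≤ countRatio p n := by
  unfold countRatio; positivity

theorem countRatio_le_one (n : ℕ) : countRatio p n ≤ 1 :=
  div_le_one_of_le₀ (by exact_mod_cast count_le p) n.cast_nonneg

theorem isBoundedUnder_le_countRatio {ι : Type*} (l : Filter ι) (a : ι → ℕ) :
    IsBoundedUnder (· ≤ ·) l fun i => countRatio p (a i) :=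
  isBoundedUnder_of ⟨1, fun _ => countRatio_le_one _⟩

theorem isBoundedUnder_ge_countRatio {ι : Type*} (l : Filter ι) (a : ι → ℕ) :
    IsBoundedUnder (· ≥ ·) l fun i => countRatio p (a i) :=
  isBoundedUnder_of ⟨0, fun _ => countRatio_nonneg _⟩

theorem lowerDensity_nonneg : 0 ≤ lowerDensity p :=
  le_liminf_of_le (isBoundedUnder_le_countRatio atTop id).isCoboundedUnder_ge
    (Eventually.of_forall countRatio_nonneg)

theorem count_le_count_add {m n : ℕ} (hmn : m ≤ n) : count p n ≤ count p m + (n - m) := by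
  obtain ⟨k, rfl⟩ := Nat.exists_eq_add_of_le hmn
  rw [count_add, Nat.add_sub_cancel_left]
  exact Nat.add_le_add_left (count_le _) _

theorem abs_countRatio_sub_le {m n : ℕ} (hmn : m ≤ n) :
    |countRatio p n - countRatio p m| ≤ ((n : ℝ) - m) / n := by
  rcases Nat.eq_zero_or_pos m with rfl | hm0
  · simp only [countRatio, Nat.cast_zero, div_zero, sub_zero, abs_div, Nat.abs_cast]
    exact div_le_div_of_nonneg_right (by exact_mod_cast count_le p) n.cast_nonneg
  have hn : (0 : ℝ) < n := by exact_mod_cast hm0.trans_le hmn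
  have hm : (0 : ℝ) < m := by exact_mod_cast hm0
  have hmn' : (m : ℝ) ≤ n := by exact_mod_cast hmn
  have hba : (count p n : ℝ) ≤ count p m + (n - m) := by
    have := count_le_count_add (p := p) hmn
    rw [← Nat.cast_le (α := ℝ)] at this
    push_cast [hmn] at this
    exact this
  have ham : (count p m : ℝ) ≤ m := by exact_mod_cast count_le p
  rw [abs_sub_le_iff, countRatio, countRatio]
  constructor
  · calc (count p n : ℝ) / n - count p m / m ≤ (count p m + (n - m)) / n - count p m / n := by
          gcongr
      _ = (n - m) / n := by ring
  · calc (count p m : ℝ) / m - count p n / n ≤ count p m / m - count p m / n := by gcongr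
      _ = count p m / m * ((n - m) / n) := by field_simp
      _ ≤ 1 * ((n - m) / n) := by
          gcongr
          exact div_le_one_of_le₀ ham hm.le
      _ = (n - m) / n := one_mul _

theorem abs_countRatio_sub_countRatio_mul_div_le {N : ℕ} (hN : 0 < N) (n : ℕ) :
    |countRatio p n - countRatio p (N * (n / N))| ≤ N / n := by
  refine (abs_countRatio_sub_le (Nat.mul_div_le n N)).trans
    (div_le_div_of_nonneg_right ?_ n.cast_nonneg)
  have : n ≤ N * (n / N) + N := by
    have := Nat.lt_mul_div_succ n hN
    rw [Nat.mul_succ] at this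
    omega
  rw [sub_le_iff_le_add']
  exact_mod_cast this

theorem lowerDensity_eq_liminf_mul {N : ℕ} (hN : 0 < N) :
    lowerDensity p = liminf (fun k => countRatio p (N * k)) atTop := by
  have hsub : liminf (fun k => countRatio p (N * k)) atTop =
      liminf (fun n => countRatio p (N * (n / N))) atTop := by
    conv_lhs => rw [← map_div_atTop_eq_nat N hN]
    rfl
  have key n := abs_sub_le_iff.1 (abs_countRatio_sub_countRatio_mul_div_le (p := p) hN n)
  rw [hsub]
  apply le_antisymm <;> refine liminf_le_liminf_of_le_add_of_tendsto_zero
    (Eventually.of_forall fun n => sub_le_iff_le_add'.1 ?_)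
    (tendsto_const_div_atTop_nhds_zero_nat (N : ℝ)) (isBoundedUnder_ge_countRatio _ _)
    (isBoundedUnder_le_countRatio _ _) (isBoundedUnder_ge_countRatio _ _)
  exacts [(key n).1, (key n).2]

theorem upperDensity_eq_limsup_mul {N : ℕ} (hN : 0 < N) :
    upperDensity p = limsup (fun k => countRatio p (N * k)) atTop := by
  have hsub : limsup (fun k => countRatio p (N * k)) atTop =
      limsup (fun n => countRatio p (N * (n / N))) atTop := by
    conv_lhs => rw [← map_div_atTop_eq_nat N hN]
    rfl
  have key n := abs_sub_le_iff.1 (abs_countRatio_sub_countRatio_mul_div_le (p := p) hN n)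
  rw [hsub]
  apply le_antisymm <;> refine limsup_le_limsup_of_le_add_of_tendsto_zero
    (Eventually.of_forall fun n => sub_le_iff_le_add'.1 ?_)
    (tendsto_const_div_atTop_nhds_zero_nat (N : ℝ)) (isBoundedUnder_ge_countRatio _ _)
    (isBoundedUnder_le_countRatio _ _) (isBoundedUnder_ge_countRatio _ _)
  exacts [(key n).1, (key n).2]

theorem count_comp_mul_le {N : ℕ} (hN : 0 < N) (k : ℕ) :
    count (fun i => p (N * i)) k ≤ count p (N * k) := by
  induction k with
  | zero => simp
  | succ k ih =>
    calc count (fun i => p (N * i)) (k + 1)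
        = count (fun i => p (N * i)) k + if p (N * k) then 1 else 0 := count_succ _ _
      _ ≤ count p (N * k) + if p (N * k) then 1 else 0 := Nat.add_le_add_right ih _
      _ = count p (N * k + 1) := (count_succ _ _).symm
      _ ≤ count p (N * (k + 1)) := count_monotone p (by rw [Nat.mul_succ]; omega)

theorem countRatio_comp_mul_le {N : ℕ} (hN : 0 < N) (k : ℕ) :
    countRatio (fun i => p (N * i)) k ≤ N * countRatio p (N * k) := by
  rw [countRatio, countRatio, Nat.cast_mul, ← mul_div_assoc,
    mul_div_mul_left _ _ (by positivity : (N : ℝ) ≠ 0)]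
  gcongr
  exact count_comp_mul_le hN k

theorem lowerDensity_comp_mul_le {N : ℕ} (hN : 0 < N) :
    lowerDensity (fun i => p (N * i)) ≤ N * lowerDensity p := by
  rw [lowerDensity_eq_liminf_mul (p := p) hN, Monotone.map_liminf_of_continuousAt
    (monotone_mul_left_of_nonneg N.cast_nonneg) _ (continuous_const_mul _).continuousAt
    (isBoundedUnder_le_countRatio _ _).isCoboundedUnder_ge (isBoundedUnder_ge_countRatio _ _)]
  exact liminf_le_liminf (Eventually.of_forall (countRatio_comp_mul_le hN))
    (isBoundedUnder_ge_countRatio _ _)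
    (isBoundedUnder_of ⟨(N : ℝ), fun k => mul_le_of_le_one_right N.cast_nonneg
      (countRatio_le_one (p := p) (N * k))⟩).isCoboundedUnder_ge

theorem upperDensity_comp_mul_le {N : ℕ} (hN : 0 < N) :
    upperDensity (fun i => p (N * i)) ≤ N * upperDensity p := by
  rw [upperDensity_eq_limsup_mul (p := p) hN, Monotone.map_limsup_of_continuousAt
    (monotone_mul_left_of_nonneg N.cast_nonneg) _ (continuous_const_mul _).continuousAt
    (isBoundedUnder_le_countRatio _ _) (isBoundedUnder_ge_countRatio _ _).isCoboundedUnder_le]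
  exact limsup_le_limsup (Eventually.of_forall (countRatio_comp_mul_le hN))
    (isBoundedUnder_ge_countRatio _ _).isCoboundedUnder_le
    (isBoundedUnder_of ⟨(N : ℝ), fun k => mul_le_of_le_one_right N.cast_nonneg
      (countRatio_le_one (p := p) (N * k))⟩)

variable {q : ℕ → Prop} [DecidablePred q]

theorem count_mul_le_mul_count {N : ℕ} (h : ∀ j, p j → q (j / N)) (k : ℕ) :
    count p (N * k) ≤ N * count q k := by
  induction k with
  | zero => simp
  | succ k ih =>
    rw [Nat.mul_succ, count_add, count_succ, Nat.mul_add]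
    split_ifs with hk
    · exact Nat.add_le_add ih ((count_le _).trans (Nat.mul_one N).ge)
    · have : count (fun i => p (N * k + i)) N = 0 := by
        refine count_iff_forall_not.2 fun i hi hp => hk ?_
        simpa [Nat.mul_add_div (by omega : 0 < N), Nat.div_eq_of_lt hi] using h _ hp
      omega

theorem count_comp_succ_le (k : ℕ) : count (fun i => q (i + 1)) k ≤ count q k + 1 := by
  have := count_succ' q k
  have := count_succ q k
  split_ifs at * <;> omega

theorem countRatio_mul_le_of_forall_add {N : ℕ} (hN : 0 < N)
    (h : ∀ j m, m ≤ N → p j → q (j + m)) (k : ℕ) :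
    countRatio p (N * k) ≤ countRatio (fun i => q (N * i)) k + 1 / k := by
  have hnext : ∀ j, p j → q (N * (j / N + 1)) := fun j hj => by
    have hlt := Nat.lt_mul_div_succ j hN
    have hle : N * (j / N + 1) ≤ j + N := by rw [Nat.mul_succ]; linarith [Nat.mul_div_le j N]
    simpa [Nat.add_sub_cancel' hlt.le] using h j (N * (j / N + 1) - j) (by omega) hj
  have hc : count p (N * k) ≤ N * (count (fun i => q (N * i)) k + 1) :=
    (count_mul_le_mul_count (q := fun i => q (N * (i + 1))) hnext k).trans
      (Nat.mul_le_mul_left _ (count_comp_succ_le (q := fun i => q (N * i)) k))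
  rcases Nat.eq_zero_or_pos k with rfl | hk
  · simp [countRatio]
  rw [countRatio, countRatio, ← add_div, Nat.cast_mul,
    div_le_div_iff₀ (by positivity) (by positivity)]
  have : ((count p (N * k) : ℕ) : ℝ) ≤ N * (count (fun i => q (N * i)) k + 1) := by
    exact_mod_cast hc
  nlinarith

theorem lowerDensity_le_of_forall_add {N : ℕ} (hN : 0 < N)
    (h : ∀ j m, m ≤ N → p j → q (j + m)) : lowerDensity p ≤ lowerDensity fun i => q (N * i) := by
  rw [lowerDensity_eq_liminf_mul hN]
  exact liminf_le_liminf_of_le_add_of_tendsto_zero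
    (Eventually.of_forall (countRatio_mul_le_of_forall_add hN h))
    tendsto_one_div_atTop_nhds_zero_nat (isBoundedUnder_ge_countRatio _ _)
    (isBoundedUnder_le_countRatio _ id) (isBoundedUnder_ge_countRatio _ id)

theorem upperDensity_le_of_forall_add {N : ℕ} (hN : 0 < N)
    (h : ∀ j m, m ≤ N → p j → q (j + m)) : upperDensity p ≤ upperDensity fun i => q (N * i) := by
  rw [upperDensity_eq_limsup_mul hN]
  exact limsup_le_limsup_of_le_add_of_tendsto_zero
    (Eventually.of_forall (countRatio_mul_le_of_forall_add hN h))
    tendsto_one_div_atTop_nhds_zero_nat (isBoundedUnder_ge_countRatio _ _)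
    (isBoundedUnder_le_countRatio _ id) (isBoundedUnder_ge_countRatio _ id)

theorem exists_lowerDensity_eq_zero_and_upperDensity_pos_iff_comp_mul {P : ℝ → ℕ → Prop}
    [∀ t, DecidablePred (P t)] {N : ℕ} (hN : 0 < N)
    (hP : ∀ t, 0 < t → ∃ δ > 0, ∀ j m, m ≤ N → P δ j → P t (j + m)) :
    ((∃ ε > 0, lowerDensity (P ε) = 0) ∧ ∀ t : ℝ, 0 < t → 0 < upperDensity (P t)) ↔
      ((∃ ε > 0, lowerDensity (fun i => P ε (N * i)) = 0) ∧
        ∀ t : ℝ, 0 < t → 0 < upperDensity fun i => P t (N * i)) := by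
  constructor
  · rintro ⟨⟨ε, hε, hlow⟩, hupp⟩
    refine ⟨⟨ε, hε, le_antisymm ?_ lowerDensity_nonneg⟩, fun t ht => ?_⟩
    · simpa [hlow] using lowerDensity_comp_mul_le (p := P ε) hN
    · obtain ⟨δ, hδ, hδt⟩ := hP t ht
      exact (hupp δ hδ).trans_le (upperDensity_le_of_forall_add hN hδt)
  · rintro ⟨⟨ε, hε, hlow⟩, hupp⟩
    obtain ⟨δ, hδ, hδε⟩ := hP ε hε
    refine ⟨⟨δ, hδ, le_antisymm ?_ lowerDensity_nonneg⟩, fun t ht => ?_⟩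
    · exact hlow ▸ lowerDensity_le_of_forall_add hN hδε
    · exact pos_of_mul_pos_right ((hupp t ht).trans_le (upperDensity_comp_mul_le hN))
        N.cast_nonneg

end Density

theorem UniformEquicontinuous.comp_uniformEquicontinuous {ι α β γ : Type*} [UniformSpace α]
    [UniformSpace β] [UniformSpace γ] {G : ι → β → γ} {F : ι → α → β}
    (hG : UniformEquicontinuous G) (hF : UniformEquicontinuous F) :
    UniformEquicontinuous fun i => G i ∘ F i :=
  fun U hU => (hF _ (hG U hU)).mono fun _ h i => h i i

theorem TendstoUniformly.uniformEquicontinuous {α β : Type*} [UniformSpace α]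
    [PseudoMetricSpace β] {F : ℕ → α → β} {f : α → β} (hF : ∀ n, UniformContinuous (F n))
    (h : TendstoUniformly F f atTop) : UniformEquicontinuous F := by
  rw [Metric.uniformEquicontinuous_iff_right]
  intro ε hε
  obtain ⟨K, hK⟩ := eventually_atTop.1 (Metric.tendstoUniformly_iff.1 h (ε / 3) (by positivity))
  have hhead : ∀ᶠ xy : α × α in 𝓤 α, ∀ n ∈ Finset.range K, dist (F n xy.1) (F n xy.2) < ε :=
    (eventually_all_finset _).2 fun n _ => (hF n).eventually (Metric.dist_mem_uniformity hε)
  filter_upwards [hhead, (h.uniformContinuous (Frequently.of_forall hF)).eventually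
    (Metric.dist_mem_uniformity (by positivity : 0 < ε / 3))] with xy hhead hf n
  rcases lt_or_ge n K with hn | hn
  · exact hhead n (Finset.mem_range.2 hn)
  · calc dist (F n xy.1) (F n xy.2)
        ≤ dist (F n xy.1) (f xy.1) + dist (f xy.1) (f xy.2) + dist (f xy.2) (F n xy.2) :=
          dist_triangle4 _ _ _ _
      _ < ε / 3 + ε / 3 + ε / 3 := by
          gcongr
          · rw [dist_comm]; exact hK n hn _
          · exact hK n hn _
      _ = ε := by ring

theorem orb_add (f : ℕ → X → X) (j m : ℕ) :
    orb f (j + m) = orb (fun i => f (j + i)) m ∘ orb f j := by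
  induction m with
  | zero => rfl
  | succ m ih => rw [← Nat.add_assoc, orb, ih]; rfl

theorem UniformEquicontinuous.orb_shift [UniformSpace X] {f : ℕ → X → X}
    (hf : UniformEquicontinuous f) (m : ℕ) :
    UniformEquicontinuous fun j => orb (fun i => f (j + i)) m := by
  induction m with
  | zero => exact fun U hU => Eventually.mono hU fun _ h _ => h
  | succ m ih => exact (hf.comp fun j => j + m).comp_uniformEquicontinuous ih

theorem exists_forall_dist_orb_add_lt [PseudoMetricSpace X] {f : ℕ → X → X}
    (hf : UniformEquicontinuous f) (N : ℕ) {t : ℝ} (ht : 0 < t) :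
    ∃ δ > 0, ∀ x y j m, m ≤ N → dist (orb f j x) (orb f j y) < δ →
      dist (orb f (j + m) x) (orb f (j + m) y) < t := by
  have : ∀ᶠ xy : X × X in 𝓤 X, ∀ m ∈ Finset.range (N + 1), ∀ j,
      dist (orb (fun i => f (j + i)) m xy.1) (orb (fun i => f (j + i)) m xy.2) < t :=
    (eventually_all_finset _).2 fun m _ =>
      Metric.uniformEquicontinuous_iff_right.1 (hf.orb_shift m) t ht
  obtain ⟨δ, hδ, hδt⟩ := Metric.mem_uniformity_dist.1 this
  refine ⟨δ, hδ, fun x y j m hm hxy => ?_⟩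
  rw [orb_add]
  exact hδt hxy m (Finset.mem_range.2 (Nat.lt_succ_of_le hm)) j

theorem phiLow_eq_lowerDensity [MetricSpace X] (f : ℕ → X → X) (τ : ℕ → ℕ) (x y : X) (t : ℝ) :
    phiLow f τ x y t = lowerDensity fun i => dist (orb f (τ i) x) (orb f (τ i) y) < t := by
  rw [phiLow, lowerDensity]
  congr 1
  funext n
  rw [countRatio, Nat.count_eq_card_filter_range]

theorem phiUpp_eq_upperDensity [MetricSpace X] (f : ℕ → X → X) (τ : ℕ → ℕ) (x y : X) (t : ℝ) :
    phiUpp f τ x y t = upperDensity fun i => dist (orb f (τ i) x) (orb f (τ i) y) < t := by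
  rw [phiUpp, upperDensity]
  congr 1
  funext n
  rw [countRatio, Nat.count_eq_card_filter_range]

theorem stmt_7 [MetricSpace X] [CompactSpace X] (f : ℕ → X → X) (g : X → X)
    (hf : ∀ n, Continuous (f n)) (hconv : TendstoUniformly f g atTop)
    (N : ℕ) (hN : 0 < N) :
    DC2' f id ↔ DC2' f (fun n => N * n) := by
  have hequi : UniformEquicontinuous f :=
    hconv.uniformEquicontinuous fun n => CompactSpace.uniformContinuous_of_continuous (hf n)
  simp only [DC2', phiLow_eq_lowerDensity, phiUpp_eq_upperDensity, id]
  refine exists_congr fun S => and_congr_right' <| forall₂_congr fun x _ =>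
    forall₂_congr fun y _ => imp_congr_right fun _ =>
      exists_lowerDensity_eq_zero_and_upperDensity_pos_iff_comp_mul hN fun t ht => ?_
  obtain ⟨δ, hδ, h⟩ := exists_forall_dist_orb_add_lt hequi N ht
  exact ⟨δ, hδ, h x y⟩
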